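/- If the trace function β satisfies Condition 1 (with β = 1 on length-0 trajectories), then for every trajectory F_t one has β(F_t) ≤ ∏_{k=1}^t ρ_k; consequently every matrix B_t is entrywise nonnegative with row sums B_t 𝟙 ≤ 𝟙, and the matrix C := Σ_{t=0}^∞ γ^t B_t is well defined with maximum absolute row-sum norm ‖C‖ ≤ 1/(1−γ). -/

import Mathlib

/-!
Condition 1 and `β(F_0) = 1` give, by induction along the trajectory, `β(F_t) ≤ ∏ ρ_k`. Multiplying
by `Pr_μ(F_t)` cancels the behavior probabilities of the actions, so `Pr_μ(F_t) β(F_t)` is at most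
`Pr_π(F_t)`, the probability of `F_t` when the actions are drawn from `π` (that is, `prMu P π`).
A row of `B_t` sums `Pr_μ(F_t) β(F_t)` over the trajectories from its pair, hence is at most the
total `π`-probability of these trajectories, which is `1`. Nonnegative rows of sum at most `1`
make `Σ_t γ^t B_t` converge entrywise, with row sums at most `Σ_t γ^t = 1/(1-γ)`.
-/

open scoped BigOperators

/-- `P` is a transition function: `P s a` is a probability distribution on next states. -/
def IsTransition {S A : Type} [Fintype S] (P : S → A → S → ℝ) : Prop :=
  (∀ s a s', 0 ≤ P s a s') ∧ ∀ s a, ∑ s', P s a s' = 1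

/-- `π` is a policy: `π s` is a probability distribution on actions. -/
def IsPolicy {S A : Type} [Fintype A] (π : S → A → ℝ) : Prop :=
  (∀ s a, 0 ≤ π s a) ∧ ∀ s, ∑ a, π s a = 1

/-- A behavior policy assigns positive probability to every action in every state. -/
def IsBehavior {S A : Type} [Fintype A] (μ : S → A → ℝ) : Prop :=
  IsPolicy μ ∧ ∀ s a, 0 < μ s a

/-- The policy matrix `P_π((s,a),(s',a')) = P(s'|s,a)·π(a'|s')`. -/
def polMat {S A : Type} (P : S → A → S → ℝ) (π : S → A → ℝ) :
    Matrix (S × A) (S × A) ℝ :=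
  fun x y => P x.1 x.2 y.1 * π y.1 y.2

/-- The importance-sampling ratio `ρ(s,a) = π(a|s) / μ(a|s)`. -/
noncomputable def isRatio {S A : Type} (π μ : S → A → ℝ) (x : S × A) : ℝ :=
  π x.1 x.2 / μ x.1 x.2

/-- Probability under behavior policy `μ` of a length-`t` trajectory
`F = ((S_0,A_0),…,(S_t,A_t))`:  `∏_{k=1}^t P(S_k|S_{k-1},A_{k-1})·μ(A_k|S_k)`. -/
def prMu {S A : Type} (P : S → A → S → ℝ) (μ : S → A → ℝ) {t : ℕ}
    (F : Fin (t + 1) → S × A) : ℝ :=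
  ∏ k : Fin t,
    (P (F k.castSucc).1 (F k.castSucc).2 (F k.succ).1 * μ (F k.succ).1 (F k.succ).2)

/-- A trace function: a nonnegative weight for every finite trajectory,
equal to `1` on length-0 trajectories. -/
def IsTrace {S A : Type} (β : (t : ℕ) → (Fin (t + 1) → S × A) → ℝ) : Prop :=
  (∀ t F, 0 ≤ β t F) ∧ ∀ F : Fin 1 → S × A, β 0 F = 1

/-- Condition 1: `β(F_t) ≤ β(F_{t-1})·ρ_t` for every `t ≥ 1` and every trajectory `F_t`,
where `F_{t-1}` is the length-`(t-1)` prefix. -/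
def Cond1 {S A : Type} (π μ : S → A → ℝ)
    (β : (t : ℕ) → (Fin (t + 1) → S × A) → ℝ) : Prop :=
  ∀ (t : ℕ) (F : Fin (t + 2) → S × A),
    β (t + 1) F ≤ β t (fun k => F k.castSucc) * isRatio π μ (F (Fin.last (t + 1)))

/-- The matrix `B_t((s,a),(s',a')) = Σ_{F_t from (s,a) ending at (s',a')} Pr_μ(F_t)·β(F_t)`. -/
noncomputable def Bmat {S A : Type} [Fintype S] [Fintype A] [DecidableEq S] [DecidableEq A]
    (P : S → A → S → ℝ) (μ : S → A → ℝ)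
    (β : (t : ℕ) → (Fin (t + 1) → S × A) → ℝ) (t : ℕ) :
    Matrix (S × A) (S × A) ℝ :=
  fun x y => ∑ F : Fin (t + 1) → S × A,
    if F 0 = x ∧ F (Fin.last t) = y then prMu P μ F * β t F else 0

/-- The Bellman operator `T_π Q = R + γ P_π Q`. -/
noncomputable def Tpi {S A : Type} [Fintype S] [Fintype A]
    (P : S → A → S → ℝ) (R : S × A → ℝ) (π : S → A → ℝ) (γ : ℝ)
    (Q : S × A → ℝ) : S × A → ℝ :=
  fun x => R x + γ * (polMat P π).mulVec Q x

/-- The Bellman optimality operator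
`(T Q)(s,a) = R(s,a) + γ Σ_{s'} P(s'|s,a) max_{a'} Q(s',a')`. -/
noncomputable def Topt {S A : Type} [Fintype S] [Fintype A] [Nonempty A]
    (P : S → A → S → ℝ) (R : S × A → ℝ) (γ : ℝ) (Q : S × A → ℝ) : S × A → ℝ :=
  fun x => R x + γ * ∑ s', P x.1 x.2 s' * ⨆ a', Q (s', a')

/-- The operator `M Q = Q + Σ_{t=0}^∞ γ^t B_t (T_π Q − Q)`. -/
noncomputable def Mop {S A : Type} [Fintype S] [Fintype A] [DecidableEq S] [DecidableEq A]
    (P : S → A → S → ℝ) (R : S × A → ℝ) (π μ : S → A → ℝ)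
    (β : (t : ℕ) → (Fin (t + 1) → S × A) → ℝ) (γ : ℝ)
    (Q : S × A → ℝ) : S × A → ℝ :=
  fun x => Q x + ∑' t : ℕ,
    γ ^ t * (Bmat P μ β t).mulVec (fun y => Tpi P R π γ Q y - Q y) x

/-- The matrix `Z = Σ_{t=1}^∞ γ^t (B_{t−1} P_π − B_t)`. -/
noncomputable def Zmat {S A : Type} [Fintype S] [Fintype A] [DecidableEq S] [DecidableEq A]
    (P : S → A → S → ℝ) (π μ : S → A → ℝ)
    (β : (t : ℕ) → (Fin (t + 1) → S × A) → ℝ) (γ : ℝ) :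
    Matrix (S × A) (S × A) ℝ :=
  fun x y => ∑' t : ℕ,
    γ ^ (t + 1) * ((Bmat P μ β t * polMat P π - Bmat P μ β (t + 1)) x y)

/-- The matrix `C = Σ_{t=0}^∞ γ^t B_t`. -/
noncomputable def Cmat {S A : Type} [Fintype S] [Fintype A] [DecidableEq S] [DecidableEq A]
    (P : S → A → S → ℝ) (μ : S → A → ℝ)
    (β : (t : ℕ) → (Fin (t + 1) → S × A) → ℝ) (γ : ℝ) :
    Matrix (S × A) (S × A) ℝ :=
  fun x y => ∑' t : ℕ, γ ^ t * Bmat P μ β t x y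

/-- The operator `M Q = Q + C (T_π Q − Q)` with `C = Σ_t γ^t B_t`. -/
noncomputable def MopC {S A : Type} [Fintype S] [Fintype A] [DecidableEq S] [DecidableEq A]
    (P : S → A → S → ℝ) (R : S × A → ℝ) (π μ : S → A → ℝ)
    (β : (t : ℕ) → (Fin (t + 1) → S × A) → ℝ) (γ : ℝ)
    (Q : S × A → ℝ) : S × A → ℝ :=
  fun x => Q x + (Cmat P μ β γ).mulVec (fun y => Tpi P R π γ Q y - Q y) x

theorem Fintype.sum_pi_fin_succ_eq_sum_snoc {X M : Type*} [Fintype X] [AddCommMonoid M] {t : ℕ}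
    (g : (Fin (t + 2) → X) → M) :
    ∑ F : Fin (t + 2) → X, g F = ∑ G : Fin (t + 1) → X, ∑ y : X, g (Fin.snoc G y) := by
  rw [← (Fin.snocEquiv fun _ => X).sum_comp, Fintype.sum_prod_type, Finset.sum_comm]
  rfl

section Trajectories

variable {S A : Type}

theorem sum_polMat_eq_one [Fintype S] [Fintype A] {P : S → A → S → ℝ} {π : S → A → ℝ}
    (hP : IsTransition P) (hπ : IsPolicy π) (x : S × A) :
    ∑ y, polMat P π x y = 1 := by
  simp only [polMat, Fintype.sum_prod_type, ← Finset.mul_sum, hπ.2, mul_one, hP.2]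

theorem prMu_snoc (P : S → A → S → ℝ) (π : S → A → ℝ) {t : ℕ}
    (G : Fin (t + 1) → S × A) (y : S × A) :
    prMu P π (Fin.snoc G y : Fin (t + 2) → S × A) =
      prMu P π G * polMat P π (G (Fin.last t)) y := by
  simp only [prMu, Fin.prod_univ_castSucc, Fin.succ_castSucc, Fin.snoc_castSucc, Fin.succ_last,
    Fin.snoc_last, polMat]

theorem prMu_nonneg [Fintype S] [Fintype A] {P : S → A → S → ℝ} {π : S → A → ℝ}
    (hP : IsTransition P) (hπ : IsPolicy π) {t : ℕ} (F : Fin (t + 1) → S × A) :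
    0 ≤ prMu P π F :=
  Finset.prod_nonneg fun _ _ => mul_nonneg (hP.1 _ _ _) (hπ.1 _ _)

theorem sum_prMu_eq_one [Fintype S] [Fintype A] [DecidableEq S] [DecidableEq A]
    {P : S → A → S → ℝ} {π : S → A → ℝ} (hP : IsTransition P) (hπ : IsPolicy π)
    (t : ℕ) (x : S × A) :
    ∑ F : Fin (t + 1) → S × A, (if F 0 = x then prMu P π F else 0) = 1 := by
  induction t generalizing x with
  | zero =>
    rw [← (Equiv.funUnique (Fin 1) (S × A)).symm.sum_comp]
    simp [prMu]
  | succ t ih =>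
    rw [Fintype.sum_pi_fin_succ_eq_sum_snoc, ← ih x]
    refine Finset.sum_congr rfl fun G _ => ?_
    have hstart : ∀ y, (Fin.snoc G y : Fin (t + 2) → S × A) 0 = G 0 := fun y =>
      Fin.snoc_castSucc (i := 0) ..
    split_ifs with hG
    · simp only [hstart, hG, if_true, prMu_snoc, ← Finset.mul_sum, sum_polMat_eq_one hP hπ,
        mul_one]
    · simp [hstart, hG]

theorem isRatio_nonneg [Fintype A] {π μ : S → A → ℝ} (hπ : IsPolicy π) (hμ : IsBehavior μ)
    (x : S × A) : 0 ≤ isRatio π μ x :=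
  div_nonneg (hπ.1 _ _) (hμ.2 _ _).le

theorem prMu_mul_prod_isRatio [Fintype A] (P : S → A → S → ℝ) {π μ : S → A → ℝ}
    (hμ : IsBehavior μ) {t : ℕ} (F : Fin (t + 1) → S × A) :
    prMu P μ F * ∏ k : Fin t, isRatio π μ (F k.succ) = prMu P π F := by
  rw [prMu, prMu, ← Finset.prod_mul_distrib]
  refine Finset.prod_congr rfl fun k _ => ?_
  rw [isRatio, mul_assoc, mul_div_cancel₀ _ (hμ.2 _ _).ne']

theorem trace_le_prod_isRatio {π μ : S → A → ℝ} {β : (t : ℕ) → (Fin (t + 1) → S × A) → ℝ}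
    (hρ : ∀ x, 0 ≤ isRatio π μ x) (hβ₀ : ∀ F, β 0 F = 1) (hc : Cond1 π μ β) :
    ∀ (t : ℕ) (F : Fin (t + 1) → S × A), β t F ≤ ∏ k : Fin t, isRatio π μ (F k.succ)
  | 0, F => (hβ₀ F).le
  | t + 1, F =>
    calc β (t + 1) F ≤ β t (fun k => F k.castSucc) * isRatio π μ (F (Fin.last (t + 1))) :=
          hc t F
      _ ≤ (∏ k : Fin t, isRatio π μ (F k.castSucc.succ)) * isRatio π μ (F (Fin.last (t + 1))) :=
          mul_le_mul_of_nonneg_right (trace_le_prod_isRatio hρ hβ₀ hc t _) (hρ _)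
      _ = ∏ k : Fin (t + 1), isRatio π μ (F k.succ) := by
          rw [Fin.prod_univ_castSucc, Fin.succ_last]

section Bmat

variable [Fintype S] [Fintype A] [DecidableEq S] [DecidableEq A]
  {P : S → A → S → ℝ} {μ : S → A → ℝ} {β : (t : ℕ) → (Fin (t + 1) → S × A) → ℝ}

theorem Bmat_nonneg (hP : IsTransition P) (hμ : IsBehavior μ) (hβ : IsTrace β)
    (t : ℕ) (x y : S × A) : 0 ≤ Bmat P μ β t x y :=
  Finset.sum_nonneg fun F _ => by
    split_ifs
    · exact mul_nonneg (prMu_nonneg hP hμ.1 F) (hβ.1 t F)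
    · exact le_rfl

theorem sum_Bmat_row (t : ℕ) (x : S × A) :
    ∑ y, Bmat P μ β t x y = ∑ F : Fin (t + 1) → S × A,
      (if F 0 = x then prMu P μ F * β t F else 0) := by
  unfold Bmat
  rw [Finset.sum_comm]
  refine Finset.sum_congr rfl fun F _ => ?_
  by_cases hF : F 0 = x <;> simp [hF]

theorem sum_Bmat_row_le_one {π : S → A → ℝ} (hP : IsTransition P) (hπ : IsPolicy π)
    (hμ : IsBehavior μ) (hβ : IsTrace β) (hc : Cond1 π μ β) (t : ℕ) (x : S × A) :
    ∑ y, Bmat P μ β t x y ≤ 1 := by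
  rw [sum_Bmat_row, ← sum_prMu_eq_one hP hπ t x]
  refine Finset.sum_le_sum fun F _ => ?_
  split_ifs
  · exact (mul_le_mul_of_nonneg_left (trace_le_prod_isRatio (isRatio_nonneg hπ hμ) hβ.2 hc t F)
      (prMu_nonneg hP hμ.1 F)).trans_eq (prMu_mul_prod_isRatio P hμ F)
  · exact le_rfl

end Bmat

end Trajectories

section GeometricSeries

variable {γ : ℝ} (hγ0 : 0 ≤ γ) (hγ1 : γ < 1) {ι : Type*} [Fintype ι] {b : ℕ → ι → ℝ}
  (hb0 : ∀ t i, 0 ≤ b t i) (hb1 : ∀ t, ∑ i, b t i ≤ 1)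
include hγ0 hγ1 hb0 hb1

theorem summable_geometric_mul_of_sum_le_one (i : ι) : Summable fun t => γ ^ t * b t i :=
  (summable_geometric_of_lt_one hγ0 hγ1).of_nonneg_of_le
    (fun t => mul_nonneg (pow_nonneg hγ0 t) (hb0 t i))
    (fun t => mul_le_of_le_one_right (pow_nonneg hγ0 t)
      ((Finset.single_le_sum (fun j _ => hb0 t j) (Finset.mem_univ i)).trans (hb1 t)))

theorem sum_abs_tsum_geometric_mul_le_one_div_one_sub :
    ∑ i, |∑' t, γ ^ t * b t i| ≤ 1 / (1 - γ) := by
  have hterm : ∀ t i, 0 ≤ γ ^ t * b t i := fun t i => mul_nonneg (pow_nonneg hγ0 t) (hb0 t i)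
  have hsum := summable_geometric_mul_of_sum_le_one hγ0 hγ1 hb0 hb1
  calc ∑ i, |∑' t, γ ^ t * b t i|
      = ∑' t, ∑ i, γ ^ t * b t i := by
        simp only [abs_of_nonneg (tsum_nonneg (hterm · _))]
        exact (Summable.tsum_finsetSum fun i _ => hsum i).symm
    _ ≤ ∑' t, γ ^ t :=
        Summable.tsum_le_tsum (fun t => by
            rw [← Finset.mul_sum]; exact mul_le_of_le_one_right (pow_nonneg hγ0 t) (hb1 t))
          (summable_sum fun i _ => hsum i) (summable_geometric_of_lt_one hγ0 hγ1)
    _ = 1 / (1 - γ) := by rw [tsum_geometric_of_lt_one hγ0 hγ1, one_div]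

end GeometricSeries

theorem stmt3_general {S A : Type} [Fintype S] [Fintype A] [DecidableEq S] [DecidableEq A]
    (P : S → A → S → ℝ) (π μ : S → A → ℝ) (γ : ℝ)
    (β : (t : ℕ) → (Fin (t + 1) → S × A) → ℝ)
    (hP : IsTransition P) (hπ : IsPolicy π) (hμ : IsBehavior μ) (hβ : IsTrace β)
    (hγ0 : 0 ≤ γ) (hγ1 : γ < 1)
    (hc : Cond1 π μ β) :
    (∀ (t : ℕ) (F : Fin (t + 1) → S × A),
        β t F ≤ ∏ k : Fin t, isRatio π μ (F k.succ)) ∧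
    (∀ (t : ℕ) (x y : S × A), 0 ≤ Bmat P μ β t x y) ∧
    (∀ (t : ℕ) (x : S × A), ∑ y : S × A, Bmat P μ β t x y ≤ 1) ∧
    (∀ x y : S × A, Summable fun t : ℕ => γ ^ t * Bmat P μ β t x y) ∧
    ∀ x : S × A, ∑ y : S × A, |Cmat P μ β γ x y| ≤ 1 / (1 - γ) := by
  have hB0 := Bmat_nonneg hP hμ hβ
  have hB1 := sum_Bmat_row_le_one hP hπ hμ hβ hc
  exact ⟨trace_le_prod_isRatio (isRatio_nonneg hπ hμ) hβ.2 hc, hB0, hB1,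
    fun x => summable_geometric_mul_of_sum_le_one hγ0 hγ1 (fun t => hB0 t x) (fun t => hB1 t x),
    fun x => sum_abs_tsum_geometric_mul_le_one_div_one_sub hγ0 hγ1 (fun t => hB0 t x)
      (fun t => hB1 t x)⟩

/-- under Condition 1, `β(F_t) ≤ ∏_{k=1}^t ρ_k`; every `B_t` is entrywise
nonnegative with row sums at most 1; `C = Σ_t γ^t B_t` is well defined (entrywise summable)
with maximum absolute row-sum norm at most `1/(1−γ)`. -/
theorem stmt3 {S A : Type} [Fintype S] [Fintype A] [DecidableEq S] [DecidableEq A]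
    [Nonempty S] [Nonempty A]
    (P : S → A → S → ℝ) (π μ : S → A → ℝ) (γ : ℝ)
    (β : (t : ℕ) → (Fin (t + 1) → S × A) → ℝ)
    (hP : IsTransition P) (hπ : IsPolicy π) (hμ : IsBehavior μ) (hβ : IsTrace β)
    (hγ0 : 0 ≤ γ) (hγ1 : γ < 1)
    (hc : Cond1 π μ β) :
    (∀ (t : ℕ) (F : Fin (t + 1) → S × A),
        β t F ≤ ∏ k : Fin t, isRatio π μ (F k.succ)) ∧
    (∀ (t : ℕ) (x y : S × A), 0 ≤ Bmat P μ β t x y) ∧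
    (∀ (t : ℕ) (x : S × A), ∑ y : S × A, Bmat P μ β t x y ≤ 1) ∧
    (∀ x y : S × A, Summable fun t : ℕ => γ ^ t * Bmat P μ β t x y) ∧
    ∀ x : S × A, ∑ y : S × A, |Cmat P μ β γ x y| ≤ 1 / (1 - γ) :=
  stmt3_general P π μ γ β hP hπ hμ hβ hγ0 hγ1 hc
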